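/- Let N be a simple network, i.e. a phylogenetic network that contains at least one reticulation vertex and in which every cut-arc is trivial. Then every SN-set S of the triplet set T(N) with |S| > 1 satisfies S = L(N); equivalently, all nontrivial SN-sets of T(N) are singletons. -/

import Mathlib

/-!
Common definitions for formalizing "Constructing the Simplest Possible
Phylogenetic Network from Triplets" (van Iersel, Kelk).

A directed graph on a vertex type `V` is given by its arc set `A : Set (V × V)`.
-/

namespace Phylo

variable {V L : Type}

/-- In-degree of a vertex. -/
noncomputable def indeg (A : Set (V × V)) (v : V) : ℕ := {u | (u, v) ∈ A}.ncard

/-- Out-degree of a vertex. -/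
noncomputable def outdeg (A : Set (V × V)) (v : V) : ℕ := {w | (v, w) ∈ A}.ncard

/-- The root: indegree 0 and outdegree 2. -/
def IsRoot (A : Set (V × V)) (v : V) : Prop := indeg A v = 0 ∧ outdeg A v = 2

/-- A split vertex: indegree 1 and outdegree 2. -/
def IsSplit (A : Set (V × V)) (v : V) : Prop := indeg A v = 1 ∧ outdeg A v = 2

/-- A reticulation vertex: indegree 2 and outdegree 1. -/
def IsRetic (A : Set (V × V)) (v : V) : Prop := indeg A v = 2 ∧ outdeg A v = 1

/-- A leaf vertex: indegree 1 and outdegree 0. -/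
def IsLeafV (A : Set (V × V)) (v : V) : Prop := indeg A v = 1 ∧ outdeg A v = 0

/-- Directed reachability (reflexive-transitive closure of the arc relation). -/
def Reaches (A : Set (V × V)) : V → V → Prop :=
  Relation.ReflTransGen fun u v => (u, v) ∈ A

/-- A directed graph is acyclic if it has no directed cycle. -/
def Acyclic (A : Set (V × V)) : Prop := ∀ u v, (u, v) ∈ A → ¬ Reaches A v u

/-- Adjacency in the underlying undirected graph. -/
def UAdj (A : Set (V × V)) (u v : V) : Prop := (u, v) ∈ A ∨ (v, u) ∈ A

/-- The underlying undirected graph is connected (on all of `V`). -/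
def ConnectedGraph (A : Set (V × V)) : Prop :=
  ∀ u v : V, Relation.ReflTransGen (UAdj A) u v

/-- Undirected connectivity within a set `S` of vertices (in the induced subgraph). -/
def ConnWithin (A : Set (V × V)) (S : Set V) : Prop :=
  ∀ u ∈ S, ∀ v ∈ S, Relation.ReflTransGen (fun a b => a ∈ S ∧ b ∈ S ∧ UAdj A a b) u v

/-- A set of at least two vertices inducing a biconnected subgraph: it is connected
and stays connected after removal of any single vertex. -/
def Biconnected (A : Set (V × V)) (S : Set V) : Prop :=
  2 ≤ S.ncard ∧ ConnWithin A S ∧ ∀ w ∈ S, ConnWithin A (S \ {w})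

/-- A biconnected component: a maximal biconnected subgraph. -/
def BiconnComp (A : Set (V × V)) (S : Set V) : Prop :=
  Biconnected A S ∧ ∀ S', Biconnected A S' → S ⊆ S' → S' = S

/-- The arcs leaving a set of vertices. -/
def outArcs (A : Set (V × V)) (S : Set V) : Set (V × V) :=
  {a ∈ A | a.1 ∈ S ∧ a.2 ∉ S}

/-- A phylogenetic network on the (finite) vertex type `V` with leaves labelled by
elements of `L`: a directed acyclic graph with exactly one vertex of indegree 0
and outdegree 2 (the root), all other vertices being split vertices, reticulation
vertices or leaves; leaves are distinctly labelled.  Moreover (to avoid redundant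
networks) every nontrivial biconnected component has at least three outgoing arcs. -/
structure PhyloNetwork (V L : Type) : Type where
  vfin : Finite V
  arcs : Set (V × V)
  lab : V → L
  acyclic : Acyclic arcs
  root_ex : ∃ r, IsRoot arcs r
  root_unique : ∀ r r', IsRoot arcs r → IsRoot arcs r' → r = r'
  vertex_type : ∀ v, IsRoot arcs v ∨ IsSplit arcs v ∨ IsRetic arcs v ∨ IsLeafV arcs v
  lab_inj : ∀ u v, IsLeafV arcs u → IsLeafV arcs v → lab u = lab v → u = v
  bicomp_out : ∀ S, BiconnComp arcs S → S.ncard ≠ 2 → 3 ≤ (outArcs arcs S).ncard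

/-- The set of leaf labels of a network. -/
def leafSet (N : PhyloNetwork V L) : Set L := {x | ∃ v, IsLeafV N.arcs v ∧ N.lab v = x}

/-- A directed path, as a nonempty list of distinct vertices consecutively joined by arcs. -/
def IsPath (A : Set (V × V)) (l : List V) : Prop :=
  l ≠ [] ∧ l.Nodup ∧ l.Chain' fun a b => (a, b) ∈ A

/-- A directed path from `u` to `v`. -/
def IsPathFromTo (A : Set (V × V)) (l : List V) (u v : V) : Prop :=
  IsPath A l ∧ l.head? = some u ∧ l.getLast? = some v

/-- `w` is an endpoint of the path `l`. -/
def IsEndpoint (l : List V) (w : V) : Prop := l.head? = some w ∨ l.getLast? = some w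

/-- Two paths are internally vertex-disjoint: any common vertex is an endpoint of both. -/
def IntDisjoint (p q : List V) : Prop :=
  ∀ w, w ∈ p → w ∈ q → IsEndpoint p w ∧ IsEndpoint q w

/-- An embedding of the triplet `xy|z` with summit `p` and cherry vertex `q`:
pairwise internally vertex-disjoint directed paths `q→x`, `q→y`, `p→q`, `p→z`. -/
def HasEmbedding (A : Set (V × V)) (p q x y z : V) : Prop :=
  p ≠ q ∧ ∃ Pqx Pqy Ppq Ppz : List V,
    IsPathFromTo A Pqx q x ∧ IsPathFromTo A Pqy q y ∧
    IsPathFromTo A Ppq p q ∧ IsPathFromTo A Ppz p z ∧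
    IntDisjoint Pqx Pqy ∧ IntDisjoint Pqx Ppq ∧ IntDisjoint Pqx Ppz ∧
    IntDisjoint Pqy Ppq ∧ IntDisjoint Pqy Ppz ∧ IntDisjoint Ppq Ppz

/-- The triplet `xy|z` (on leaf labels) is consistent with the network `N`. -/
def ConsistentT (N : PhyloNetwork V L) (x y z : L) : Prop :=
  ∃ a b c : V, IsLeafV N.arcs a ∧ IsLeafV N.arcs b ∧ IsLeafV N.arcs c ∧
    N.lab a = x ∧ N.lab b = y ∧ N.lab c = z ∧ a ≠ b ∧ a ≠ c ∧ b ≠ c ∧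
    ∃ p q, HasEmbedding N.arcs p q a b c

/-- `T(N)`: the set of all triplets consistent with `N`
(the triple `(x,y,z)` codes the triplet `xy|z`). -/
def TN (N : PhyloNetwork V L) : Set (L × L × L) := {t | ConsistentT N t.1 t.2.1 t.2.2}

/-- `N` is consistent with every triplet in `T`. -/
def ConsistentSet (N : PhyloNetwork V L) (T : Set (L × L × L)) : Prop :=
  ∀ t ∈ T, ConsistentT N t.1 t.2.1 t.2.2

/-- `N` reflects `T` if `T(N) = T`. -/
def Reflects (N : PhyloNetwork V L) (T : Set (L × L × L)) : Prop := TN N = T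

/-- `L(T)`: the set of leaves occurring in a triplet set. -/
def tripletLeaves (T : Set (L × L × L)) : Set L :=
  {x | ∃ t ∈ T, x = t.1 ∨ x = t.2.1 ∨ x = t.2.2}

/-- `T` is a well-formed triplet set: in each triplet the three leaves are distinct, and
the coding is invariant under swapping the first two coordinates (`xy|z = yx|z`). -/
def IsTripletSet (T : Set (L × L × L)) : Prop :=
  ∀ t ∈ T, (t.2.1, t.1, t.2.2) ∈ T ∧ t.1 ≠ t.2.1 ∧ t.1 ≠ t.2.2 ∧ t.2.1 ≠ t.2.2

/-- `T` is dense: for any three distinct leaves at least one triplet on them is present. -/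
def DenseT (T : Set (L × L × L)) : Prop :=
  ∀ x ∈ tripletLeaves T, ∀ y ∈ tripletLeaves T, ∀ z ∈ tripletLeaves T,
    x ≠ y → x ≠ z → y ≠ z → (x, y, z) ∈ T ∨ (x, z, y) ∈ T ∨ (y, z, x) ∈ T

/-- `S` is an SN-set of `T` with respect to the leaf set `U`: `S ⊆ U` and there is
no triplet `xy|z ∈ T` with `x, z ∈ S` and `y ∉ S`. -/
def SNSetOn (T : Set (L × L × L)) (U S : Set L) : Prop :=
  S ⊆ U ∧ ¬ ∃ x y z, (x, y, z) ∈ T ∧ x ∈ S ∧ z ∈ S ∧ y ∉ S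

/-- `S` is an SN-set of `T`. -/
def SNSet (T : Set (L × L × L)) (S : Set L) : Prop := SNSetOn T (tripletLeaves T) S

/-- `S` is a maximal SN-set: a nontrivial SN-set not strictly contained
in any nontrivial SN-set. -/
def MaxSNSet (T : Set (L × L × L)) (S : Set L) : Prop :=
  SNSet T S ∧ S ≠ tripletLeaves T ∧
    ∀ S', SNSet T S' → S' ≠ tripletLeaves T → S ⊆ S' → S' = S

/-- `S` is an SN-set maximal under the restriction of not containing `B`. -/
def MaxSNAvoid (T : Set (L × L × L)) (B S : Set L) : Prop :=
  SNSet T S ∧ ¬ B ⊆ S ∧ ∀ S', SNSet T S' → ¬ B ⊆ S' → S ⊆ S' → S' = S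

/-- `T|S`: the triplets of `T` all of whose leaves lie in `S`. -/
def restrictT (T : Set (L × L × L)) (S : Set L) : Set (L × L × L) :=
  {t ∈ T | t.1 ∈ S ∧ t.2.1 ∈ S ∧ t.2.2 ∈ S}

/-- A cut-arc: an arc whose removal disconnects the underlying undirected graph. -/
def CutArc (A : Set (V × V)) (a : V × V) : Prop :=
  a ∈ A ∧ ¬ ConnectedGraph (A \ {a})

/-- A simple network: it contains a reticulation vertex and all its cut-arcs are
trivial (i.e. end in a leaf). -/
def SimpleNet (N : PhyloNetwork V L) : Prop :=
  (∃ v, IsRetic N.arcs v) ∧ ∀ a, CutArc N.arcs a → IsLeafV N.arcs a.2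

/-- A level-`k` network: every biconnected component contains at most `k`
reticulation vertices. -/
def IsLevel (N : PhyloNetwork V L) (k : ℕ) : Prop :=
  ∀ S, BiconnComp N.arcs S → {v ∈ S | IsRetic N.arcs v}.ncard ≤ k

/-- The total number of reticulation vertices of a network. -/
noncomputable def numRetic (N : PhyloNetwork V L) : ℕ := {v | IsRetic N.arcs v}.ncard

/-- The level of a network: the smallest `k` such that it is a level-`k` network. -/
noncomputable def netLevel (N : PhyloNetwork V L) : ℕ := sInf {k | IsLevel N k}

/-- A highest cut-arc: a cut-arc not reachable from any other cut-arc. -/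
def HighestCutArc (A : Set (V × V)) (a : V × V) : Prop :=
  CutArc A a ∧ ∀ b, CutArc A b → b ≠ a → ¬ Reaches A b.2 a.1

/-- The set of leaf labels below a vertex `v`. -/
def leavesBelowV (N : PhyloNetwork V L) (v : V) : Set L :=
  {x | ∃ w, IsLeafV N.arcs w ∧ Reaches N.arcs v w ∧ N.lab w = x}

/-- An (undirected) cycle in the underlying undirected graph, as a list of at least
three distinct vertices that are consecutively adjacent, the last being adjacent
to the first. -/
def IsUCycle (A : Set (V × V)) (l : List V) : Prop :=
  3 ≤ l.length ∧ l.Nodup ∧ l.Chain' (UAdj A) ∧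
    ∃ u w, l.head? = some u ∧ l.getLast? = some w ∧ UAdj A w u

/-- A highest reticulation: a reticulation lying on a cycle through the root. -/
def HighestRetic (N : PhyloNetwork V L) (r : V) : Prop :=
  IsRetic N.arcs r ∧
    ∃ c, IsUCycle N.arcs c ∧ r ∈ c ∧ ∃ rt, IsRoot N.arcs rt ∧ rt ∈ c

/-- `BHR(N)`: the set of leaves below a highest reticulation. -/
def BHR (N : PhyloNetwork V L) : Set L :=
  {x | ∃ r, HighestRetic N r ∧ x ∈ leavesBelowV N r}

/-- The collection of sets of leaves below the highest cut-arcs of `N`. -/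
def highCutArcLeafSets (N : PhyloNetwork V L) : Set (Set L) :=
  {S | ∃ a, HighestCutArc N.arcs a ∧ S = leavesBelowV N a.2}

/-- `CutInduce(N,T)`: the induced triplet set on the sets of leaves below the
highest cut-arcs of `N`. -/
def CutInduce (N : PhyloNetwork V L) (T : Set (L × L × L)) :
    Set (Set L × Set L × Set L) :=
  {t | t.1 ∈ highCutArcLeafSets N ∧ t.2.1 ∈ highCutArcLeafSets N ∧
       t.2.2 ∈ highCutArcLeafSets N ∧
       t.1 ≠ t.2.1 ∧ t.1 ≠ t.2.2 ∧ t.2.1 ≠ t.2.2 ∧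
       ∃ x ∈ t.1, ∃ y ∈ t.2.1, ∃ z ∈ t.2.2, (x, y, z) ∈ T}

/-- `T ∇ C`: the triplet set induced by a collection `C` of leaf sets. -/
def TInduced (T : Set (L × L × L)) (C : Set (Set L)) : Set (Set L × Set L × Set L) :=
  {t | t.1 ∈ C ∧ t.2.1 ∈ C ∧ t.2.2 ∈ C ∧
       t.1 ≠ t.2.1 ∧ t.1 ≠ t.2.2 ∧ t.2.1 ≠ t.2.2 ∧
       ∃ x ∈ t.1, ∃ y ∈ t.2.1, ∃ z ∈ t.2.2, (x, y, z) ∈ T}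

/-- A label-preserving isomorphism of networks. -/
def NetIso {V₁ V₂ L : Type} (N₁ : PhyloNetwork V₁ L) (N₂ : PhyloNetwork V₂ L) : Prop :=
  ∃ e : V₁ ≃ V₂, (∀ u v : V₁, (u, v) ∈ N₁.arcs ↔ (e u, e v) ∈ N₂.arcs) ∧
    ∀ v, IsLeafV N₁.arcs v → N₂.lab (e v) = N₁.lab v

/-- A (rooted, binary) phylogenetic tree given by its arc set: acyclic, a unique
vertex of indegree 0, every vertex of indegree at most 1 and outdegree 0 or 2.
(The single-vertex tree is allowed.) -/
def IsTreeArcs (A : Set (V × V)) : Prop :=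
  Acyclic A ∧ (∃! r, indeg A r = 0) ∧ (∀ v, indeg A v ≤ 1) ∧
    ∀ v, outdeg A v = 0 ∨ outdeg A v = 2

/-- The leaf labels of a tree (leaves are the vertices of outdegree 0). -/
def treeLeafSet (A : Set (V × V)) (lab : V → L) : Set L :=
  {x | ∃ v, outdeg A v = 0 ∧ lab v = x}

/-- The triplet `xy|z` is consistent with the tree given by `A` and labelling `lab`. -/
def TreeConsistentTriplet (A : Set (V × V)) (lab : V → L) (x y z : L) : Prop :=
  ∃ a b c : V, outdeg A a = 0 ∧ outdeg A b = 0 ∧ outdeg A c = 0 ∧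
    lab a = x ∧ lab b = y ∧ lab c = z ∧ a ≠ b ∧ a ≠ c ∧ b ≠ c ∧
    ∃ p q, HasEmbedding A p q a b c

/-- A CandidateTBR SN-set: an SN-set `S` of `T` such that `T|S` is consistent with
some phylogenetic tree on the leaf set `S`. -/
def CandidateTBR (T : Set (L × L × L)) (S : Set L) : Prop :=
  SNSet T S ∧ ∃ (V : Type) (_ : Finite V) (A : Set (V × V)) (lab : V → L),
    IsTreeArcs A ∧
    (∀ u v, outdeg A u = 0 → outdeg A v = 0 → lab u = lab v → u = v) ∧
    treeLeafSet A lab = S ∧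
    ∀ t ∈ restrictT T S, TreeConsistentTriplet A lab t.1 t.2.1 t.2.2

/-- `S'` is an SN-set of `T|S` (with leaf set `S`) that is maximal under the
restriction of being a nontrivial (proper) subset of `S`. -/
def MaxProperSN (T : Set (L × L × L)) (S S' : Set L) : Prop :=
  SNSetOn (restrictT T S) S S' ∧ S' ≠ S ∧
    ∀ S'', SNSetOn (restrictT T S) S S'' → S'' ≠ S → S' ⊆ S'' → S'' = S'

/-!
Let `x, z` be leaves labelled in `S` and suppose some leaf `y` is not. Among the vertices lying
on every path from the root to a leaf labelled in `S` (the root is one) none can be lowest.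
A vertex above a leaf outside `S` cannot have two internally disjoint paths to leaves of `S`,
since they would embed a triplet `sy|s'` with `s, s' ∈ S`, so by Menger's theorem such paths all
pass through a common lower vertex. A reticulation passes the property on to its child. A split
vertex with only leaves of `S` below it cannot have it at all: the only arc entering its
descendants would be its in-arc, a nontrivial cut-arc.
-/

theorem _root_.List.exists_eq_append_cons_first {α : Type*} (p : α → Prop) {l : List α}
    (h : ∃ a ∈ l, p a) : ∃ l₁ a l₂, l = l₁ ++ a :: l₂ ∧ p a ∧ ∀ b ∈ l₁, ¬ p b := by
  induction l with
  | nil => simp at h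
  | cons x t ih =>
    by_cases hx : p x
    · exact ⟨[], x, t, rfl, hx, by simp⟩
    · obtain ⟨a, ha, hpa⟩ := h
      rcases List.mem_cons.mp ha with rfl | ha
      · exact absurd hpa hx
      · obtain ⟨t₁, a', t₂, rfl, hpa', hall⟩ := ih ⟨a, ha, hpa⟩
        refine ⟨x :: t₁, a', t₂, rfl, hpa', ?_⟩
        rintro b (_ | ⟨_, hb⟩)
        exacts [hx, hall b hb]

theorem _root_.List.exists_eq_append_cons_last {α : Type*} (p : α → Prop) {l : List α}
    (h : ∃ a ∈ l, p a) : ∃ l₁ a l₂, l = l₁ ++ a :: l₂ ∧ p a ∧ ∀ b ∈ l₂, ¬ p b := by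
  obtain ⟨l₁, a, l₂, hl, ha, hall⟩ :=
    List.exists_eq_append_cons_first p (l := l.reverse) (by simpa using h)
  refine ⟨l₂.reverse, a, l₁.reverse, ?_, ha, fun b hb => hall b (by simpa using hb)⟩
  simpa using congrArg List.reverse hl

section Paths

variable {A : Set (V × V)} {l l₁ l₂ : List V} {u v w : V}

namespace IsPathFromTo

theorem ne_nil (h : IsPathFromTo A l u v) : l ≠ [] := h.1.1

theorem nodup (h : IsPathFromTo A l u v) : l.Nodup := h.1.2.1

theorem chain (h : IsPathFromTo A l u v) : l.IsChain fun a b => (a, b) ∈ A := h.1.2.2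

theorem head (h : IsPathFromTo A l u v) : l.head? = some u := h.2.1

theorem getLast (h : IsPathFromTo A l u v) : l.getLast? = some v := h.2.2

theorem singleton (u : V) : IsPathFromTo A [u] u u :=
  ⟨⟨by simp, by simp, List.isChain_singleton _⟩, rfl, rfl⟩

theorem head_mem (h : IsPathFromTo A l u v) : u ∈ l :=
  List.mem_of_mem_head? h.head

theorem getLast_mem (h : IsPathFromTo A l u v) : v ∈ l :=
  List.mem_of_mem_getLast? h.getLast

theorem eq_cons (h : IsPathFromTo A l u v) : ∃ t, l = u :: t := by
  obtain _ | ⟨a, t⟩ := l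
  · exact absurd rfl h.ne_nil
  · obtain rfl : a = u := by simpa using h.head
    exact ⟨t, rfl⟩

theorem cons (hA : (u, w) ∈ A) (h : IsPathFromTo A l w v) (hu : u ∉ l) :
    IsPathFromTo A (u :: l) u v := by
  obtain ⟨t, rfl⟩ := h.eq_cons
  refine ⟨⟨by simp, List.nodup_cons.mpr ⟨hu, h.nodup⟩, ?_⟩, rfl, ?_⟩
  · rw [List.Chain', List.isChain_cons_cons]
    exact ⟨hA, h.chain⟩
  · rw [List.getLast?_cons_cons]
    exact h.getLast

theorem of_cons (h : IsPathFromTo A (u :: l) u v) (hl : l ≠ []) :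
    ∃ w, (u, w) ∈ A ∧ IsPathFromTo A l w v := by
  obtain _ | ⟨w, t⟩ := l
  · exact absurd rfl hl
  have hch := h.chain
  rw [List.isChain_cons_cons] at hch
  refine ⟨w, hch.1, ⟨⟨by simp, h.nodup.of_cons, hch.2⟩, rfl, ?_⟩⟩
  simpa [List.getLast?_cons_cons] using h.getLast

theorem exists_cons_cons (h : IsPathFromTo A l u v) (hne : u ≠ v) :
    ∃ w t, l = u :: w :: t ∧ (u, w) ∈ A ∧ IsPathFromTo A (w :: t) w v := by
  obtain ⟨t, rfl⟩ := h.eq_cons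
  have ht : t ≠ [] := by
    rintro rfl
    exact hne (by simpa using h.getLast)
  obtain ⟨w, hw, hwt⟩ := h.of_cons ht
  obtain ⟨t', rfl⟩ := hwt.eq_cons
  exact ⟨w, t', rfl, hw, hwt⟩

theorem split (h : IsPathFromTo A l u v) (hl : l = l₁ ++ w :: l₂) :
    IsPathFromTo A (l₁ ++ [w]) u w ∧ IsPathFromTo A (w :: l₂) w v := by
  subst hl
  obtain ⟨⟨-, hnd, hch⟩, hh, hlast⟩ := h
  have hch2 := List.isChain_append.mp hch
  constructor
  · refine ⟨⟨by simp, ?_, ?_⟩, ?_, by simp⟩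
    · exact (List.nodup_append.mp (by simpa using hnd : ((l₁ ++ [w]) ++ l₂).Nodup)).1
    · rw [List.Chain', List.isChain_append]
      refine ⟨hch2.1, by simp, fun x hx y hy => ?_⟩
      obtain rfl : w = y := by simpa using hy
      exact hch2.2.2 x hx w (by simp)
    · cases l₁ <;> simpa using hh
  · refine ⟨⟨by simp, (List.nodup_append.mp hnd).2.1, hch2.2.1⟩, rfl, ?_⟩
    rwa [List.getLast?_append_of_ne_nil _ (by simp)] at hlast

theorem exists_split (h : IsPathFromTo A l u v) (hw : w ∈ l) :
    ∃ l₁ l₂, l = l₁ ++ w :: l₂ ∧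
      IsPathFromTo A (l₁ ++ [w]) u w ∧ IsPathFromTo A (w :: l₂) w v := by
  obtain ⟨l₁, l₂, rfl⟩ := List.append_of_mem hw
  exact ⟨l₁, l₂, rfl, h.split rfl⟩

theorem reaches (h : IsPathFromTo A l u v) : Reaches A u v := by
  induction l generalizing u with
  | nil => exact absurd rfl h.ne_nil
  | cons a t ih =>
    obtain rfl : a = u := by simpa using h.head
    rcases eq_or_ne t [] with rfl | ht
    · obtain rfl : a = v := by simpa using h.getLast
      exact Relation.ReflTransGen.refl
    · obtain ⟨w, hw, hwt⟩ := h.of_cons ht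
      exact Relation.ReflTransGen.head hw (ih hwt)

theorem source_reaches (h : IsPathFromTo A l u v) (hw : w ∈ l) : Reaches A u w := by
  obtain ⟨_, _, _, h₁, _⟩ := h.exists_split hw
  exact h₁.reaches

theorem reaches_target (h : IsPathFromTo A l u v) (hw : w ∈ l) : Reaches A w v := by
  obtain ⟨_, _, _, _, h₂⟩ := h.exists_split hw
  exact h₂.reaches

theorem append_tail (h₁ : IsPathFromTo A l₁ u w) (h₂ : IsPathFromTo A l₂ w v)
    (hmeet : ∀ a ∈ l₁, a ∈ l₂ → a = w) : IsPathFromTo A (l₁ ++ l₂.tail) u v := by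
  obtain ⟨t, rfl⟩ := h₂.eq_cons
  rcases eq_or_ne t [] with rfl | ht
  · obtain rfl : w = v := by simpa using h₂.getLast
    simpa using h₁
  obtain ⟨x, hx, hxt⟩ := h₂.of_cons ht
  obtain ⟨t', rfl⟩ := hxt.eq_cons
  obtain ⟨s, rfl⟩ := h₁.eq_cons
  simp only [List.tail_cons]
  refine ⟨⟨by simp, ?_, ?_⟩, rfl, ?_⟩
  · refine List.nodup_append.mpr ⟨h₁.nodup, hxt.nodup, fun a ha b hb hab => ?_⟩
    subst hab
    obtain rfl := hmeet a ha (List.mem_cons_of_mem _ hb)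
    exact (List.nodup_cons.mp h₂.nodup).1 hb
  · rw [List.Chain', List.isChain_append]
    refine ⟨h₁.chain, hxt.chain, fun a ha b hb => ?_⟩
    rw [h₁.getLast] at ha
    rw [hxt.head] at hb
    cases ha
    cases hb
    exact hx
  · rw [List.getLast?_append_of_ne_nil _ hxt.ne_nil]
    exact hxt.getLast

theorem append_of_arc {α β : V} (h₁ : IsPathFromTo A l₁ u α) (hαβ : (α, β) ∈ A)
    (h₂ : IsPathFromTo A l₂ β v) (hdisj : ∀ a ∈ l₁, a ∉ l₂) :
    IsPathFromTo A (l₁ ++ l₂) u v := by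
  obtain ⟨s, rfl⟩ := h₁.eq_cons
  refine ⟨⟨by simp, ?_, ?_⟩, rfl, ?_⟩
  · exact List.nodup_append.mpr
      ⟨h₁.nodup, h₂.nodup, fun a ha b hb hab => hdisj a ha (hab ▸ hb)⟩
  · rw [List.Chain', List.isChain_append]
    refine ⟨h₁.chain, h₂.chain, fun a ha b hb => ?_⟩
    rw [h₁.getLast] at ha
    rw [h₂.head] at hb
    cases ha
    cases hb
    exact hαβ
  · rw [List.getLast?_append_of_ne_nil _ h₂.ne_nil]
    exact h₂.getLast

end IsPathFromTo

theorem Reaches.exists_isPathFromTo (h : Reaches A u v) : ∃ l, IsPathFromTo A l u v := by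
  induction h using Relation.ReflTransGen.head_induction_on with
  | refl => exact ⟨[v], IsPathFromTo.singleton v⟩
  | @head a b hab _ ih =>
    obtain ⟨l, hl⟩ := ih
    by_cases ha : a ∈ l
    · obtain ⟨s, t, rfl⟩ := List.append_of_mem ha
      exact ⟨a :: t, (hl.split rfl).2⟩
    · exact ⟨a :: l, hl.cons hab ha⟩

end Paths

section Digraphs

variable {A : Set (V × V)} {u v w : V}

theorem outdeg_ne_zero_iff [Finite V] : outdeg A v ≠ 0 ↔ ∃ w, (v, w) ∈ A := by
  simp [outdeg, Set.ncard_eq_zero (Set.toFinite _), Set.eq_empty_iff_forall_notMem]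

theorem indeg_ne_zero_iff [Finite V] : indeg A v ≠ 0 ↔ ∃ u, (u, v) ∈ A := by
  simp [indeg, Set.ncard_eq_zero (Set.toFinite _), Set.eq_empty_iff_forall_notMem]

theorem existsUnique_of_indeg_eq_one (h : indeg A v = 1) : ∃! u, (u, v) ∈ A := by
  obtain ⟨u, hu⟩ := Set.ncard_eq_one.mp h
  exact ⟨u, hu.ge rfl, fun x hx => hu.le hx⟩

theorem existsUnique_of_outdeg_eq_one (h : outdeg A v = 1) : ∃! w, (v, w) ∈ A := by
  obtain ⟨w, hw⟩ := Set.ncard_eq_one.mp h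
  exact ⟨w, hw.ge rfl, fun x hx => hw.le hx⟩

theorem three_le_outdeg [Finite V] {a b c : V} (ha : (v, a) ∈ A) (hb : (v, b) ∈ A)
    (hc : (v, c) ∈ A) (hab : a ≠ b) (hac : a ≠ c) (hbc : b ≠ c) : 3 ≤ outdeg A v := by
  calc 3 = ({a, b, c} : Set V).ncard :=
        (Set.ncard_eq_three.mpr ⟨a, b, c, hab, hac, hbc, rfl⟩).symm
    _ ≤ outdeg A v := Set.ncard_le_ncard (by simp [Set.insert_subset_iff, ha, hb, hc])

theorem Reaches.eq_of_outdeg_eq_zero [Finite V] (h : Reaches A v w) (h0 : outdeg A v = 0) :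
    w = v := by
  rcases Relation.reflTransGen_iff_eq_or_transGen.mp h with h | h
  · exact h
  · obtain ⟨b, hvb, -⟩ := Relation.TransGen.head'_iff.mp h
    exact absurd h0 (outdeg_ne_zero_iff.mpr ⟨b, hvb⟩)

theorem Acyclic.reaches_antisymm (hA : Acyclic A) (h₁ : Reaches A u v) (h₂ : Reaches A v u) :
    u = v := by
  rcases Relation.reflTransGen_iff_eq_or_transGen.mp h₁ with h | h
  · exact h.symm
  · obtain ⟨b, hub, hbv⟩ := Relation.TransGen.tail'_iff.mp h
    exact absurd (h₂.trans hub) (hA b v hbv)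

theorem Acyclic.ne_of_arc_of_reaches (hA : Acyclic A) (huw : (u, w) ∈ A) (hwv : Reaches A w v) :
    u ≠ v := by
  rintro rfl
  exact hA u w huw hwv

theorem Acyclic.wellFounded_descendant [Finite V] (hA : Acyclic A) :
    WellFounded fun a b => Reaches A b a ∧ a ≠ b :=
  @Finite.wellFounded_of_trans_of_irrefl _ _ _
    ⟨fun _ _ _ ⟨hba, _⟩ ⟨hcb, hbc⟩ =>
      ⟨hcb.trans hba, fun hac => hbc (hA.reaches_antisymm (hac ▸ hba) hcb)⟩⟩
    ⟨fun _ h => h.2 rfl⟩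

theorem Acyclic.wellFounded_ancestor [Finite V] (hA : Acyclic A) :
    WellFounded fun a b => Reaches A a b ∧ a ≠ b :=
  @Finite.wellFounded_of_trans_of_irrefl _ _ _
    ⟨fun _ _ _ ⟨hab, hab'⟩ ⟨hbc, _⟩ =>
      ⟨hab.trans hbc, fun hac => hab' (hA.reaches_antisymm hab (hac ▸ hbc))⟩⟩
    ⟨fun _ h => h.2 rfl⟩

theorem cutArc_of_forall_arc_into_descendants {τ ρ : V} (hτv : (τ, v) ∈ A)
    (hvρ : ¬ Reaches A v ρ)
    (hin : ∀ a b, (a, b) ∈ A → Reaches A v b → ¬ Reaches A v a → a = τ ∧ b = v) :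
    CutArc A (τ, v) := by
  refine ⟨hτv, fun hconn => ?_⟩
  suffices ∀ x, Relation.ReflTransGen (UAdj (A \ {(τ, v)})) ρ x → ¬ Reaches A v x from
    this v (hconn ρ v) Relation.ReflTransGen.refl
  intro x hx
  induction hx with
  | refl => exact hvρ
  | @tail b c _ hbc ih =>
    intro hvc
    rcases hbc with ⟨hbc, hne⟩ | ⟨hcb, -⟩
    · obtain ⟨rfl, rfl⟩ := hin b c hbc hvc ih
      exact hne rfl
    · exact ih (hvc.tail hcb)

end Digraphs

section Dominators

variable {A : Set (V × V)} {T : Set V} {l P Q R Z : List V} {u v w : V}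

def IsPathFromToSet (A : Set (V × V)) (l : List V) (u : V) (T : Set V) : Prop :=
  ∃ t ∈ T, IsPathFromTo A l u t

def Dominates (A : Set (V × V)) (u : V) (T : Set V) (v : V) : Prop :=
  ∀ l, IsPathFromToSet A l u T → v ∈ l

def TwoDisjointPaths (A : Set (V × V)) (u : V) (T : Set V) : Prop :=
  ∃ l₁ l₂, IsPathFromToSet A l₁ u T ∧ IsPathFromToSet A l₂ u T ∧ ∀ a ∈ l₁, a ∈ l₂ → a = u

theorem IsPathFromToSet.source_reaches (h : IsPathFromToSet A l u T) (hv : v ∈ l) :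
    Reaches A u v := by
  obtain ⟨t, -, hp⟩ := h
  exact hp.source_reaches hv

theorem Dominates.self : Dominates A u T u := fun _ ⟨_, _, h⟩ => h.head_mem

theorem Dominates.trans (huv : Dominates A u T v) (hvw : Dominates A v T w) :
    Dominates A u T w := by
  intro l hl
  obtain ⟨t, ht, hlt⟩ := hl
  obtain ⟨P, Q, rfl, -, hQ⟩ := hlt.exists_split (huv _ ⟨t, ht, hlt⟩)
  exact List.mem_append_right P (hvw _ ⟨t, ht, hQ⟩)

theorem Dominates.of_unique_successor {c : V} (hv : Dominates A u T v) (hvT : v ∉ T)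
    (hc : ∀ d, (v, d) ∈ A → d = c) : Dominates A u T c := by
  intro l hl
  obtain ⟨t, ht, hlt⟩ := hl
  obtain ⟨P, Q, rfl, -, hQ⟩ := hlt.exists_split (hv l ⟨t, ht, hlt⟩)
  obtain ⟨d, Q', hQd, hvd, -⟩ := hQ.exists_cons_cons (by rintro rfl; exact hvT ht)
  obtain rfl := (List.cons.inj hQd).2
  simp [hc d hvd]

/-- Given two paths `Q₁, Q₂` from `w` into `T` meeting only at `w`, follow `R` until it first
meets one of them, say `Q₁`, and continue along `Q₁`; with `P` followed by `Q₂` this gives two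
paths from `v` meeting only at `v`. -/
theorem not_twoDisjointPaths_of_avoiding (hA : Acyclic A) (hv : ¬ TwoDisjointPaths A v T)
    (hP : IsPathFromTo A P v w) (hR : IsPathFromToSet A R v T) (hwR : w ∉ R)
    (hPR : ∀ a ∈ P, a ∈ R → a = v) : ¬ TwoDisjointPaths A w T := by
  rintro ⟨Q₁, Q₂, hQ₁, hQ₂, hQ⟩
  have hPQ : ∀ {Q}, IsPathFromToSet A Q w T → ∀ a ∈ P, a ∈ Q → a = w := fun hQ a haP haQ =>
    hA.reaches_antisymm (hP.reaches_target haP) (hQ.source_reaches haQ)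
  have hcontact : ∃ a ∈ R, a ∈ Q₁ ∨ a ∈ Q₂ := by
    by_contra! hno
    obtain ⟨t, ht, hQ₁t⟩ := hQ₁
    refine hv ⟨_, R, ⟨t, ht, hP.append_tail hQ₁t (hPQ ⟨t, ht, hQ₁t⟩)⟩, hR, fun a ha haR => ?_⟩
    rcases List.mem_append.mp ha with haP | haQ
    · exact hPR a haP haR
    · exact absurd (List.mem_of_mem_tail haQ) (hno a haR).1
  obtain ⟨R₁, μ, R₂, hRμ, hμ, hR₁⟩ := List.exists_eq_append_cons_first _ hcontact
  wlog hμQ₁ : μ ∈ Q₁ generalizing Q₁ Q₂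
  · exact this Q₂ Q₁ hQ₂ hQ₁ (fun a h₂ h₁ => hQ a h₁ h₂) ⟨μ, by simp [hRμ], hμ.symm⟩ hμ.symm
      (fun b hb => by simpa [or_comm] using hR₁ b hb) (hμ.resolve_left hμQ₁)
  obtain ⟨t₁, ht₁, hQ₁t⟩ := hQ₁
  obtain ⟨tR, -, hRt⟩ := hR
  obtain ⟨σ₁, σ₂, hQ₁σ, -, hσ⟩ := hQ₁t.exists_split hμQ₁
  have hμw : μ ≠ w := fun h => hwR (h ▸ by simp [hRμ])
  have hσQ₁ : ∀ a ∈ σ₂, a ∈ Q₁ := fun a ha => by simp [hQ₁σ, ha]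
  have hwσ : w ∉ σ₂ := fun hw =>
    hμw (hA.reaches_antisymm (hσ.source_reaches (List.mem_cons_of_mem _ hw))
      (hQ₁t.source_reaches hμQ₁))
  have hR₁μ : ∀ a ∈ R₁ ++ [μ], a ∈ R ∧ (a ∈ Q₁ ∨ a ∈ Q₂ → a = μ) := by
    intro a ha
    rw [List.mem_append, List.mem_singleton] at ha
    rcases ha with ha | rfl
    · exact ⟨by simp [hRμ, ha], fun h => absurd h (hR₁ a ha)⟩
    · exact ⟨by simp [hRμ], fun _ => rfl⟩
  obtain ⟨t₂, ht₂, hQ₂t⟩ := hQ₂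
  refine hv ⟨_, _, ⟨t₂, ht₂, hP.append_tail hQ₂t (hPQ ⟨t₂, ht₂, hQ₂t⟩)⟩,
    ⟨t₁, ht₁, (hRt.split hRμ).1.append_tail hσ fun a ha haσ => ?_⟩, fun a ha₁ ha₂ => ?_⟩
  · rcases List.mem_cons.mp haσ with rfl | haσ
    · rfl
    · exact (hR₁μ a ha).2 (Or.inl (hσQ₁ a haσ))
  · rw [List.tail_cons] at ha₂
    rcases List.mem_append.mp ha₁ with haP | haQ₂ <;>
      rcases List.mem_append.mp ha₂ with haR | haσ
    · exact hPR a haP (hR₁μ a haR).1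
    · exact absurd (hPQ ⟨t₁, ht₁, hQ₁t⟩ a haP (hσQ₁ a haσ) ▸ haσ) hwσ
    · have hQ₂' := List.mem_of_mem_tail haQ₂
      obtain rfl := (hR₁μ a haR).2 (Or.inr hQ₂')
      exact absurd (hQ a hμQ₁ hQ₂') hμw
    · exact absurd (hQ a (hσQ₁ a haσ) (List.mem_of_mem_tail haQ₂) ▸ haσ) hwσ

theorem IsPathFromToSet.reroute {m : V} (hZ : IsPathFromToSet A Z u T) (hZm : Z = P ++ m :: Q)
    (hR : IsPathFromToSet A R v T) (hmR : m ∈ R) (hPR : ∀ a ∈ P, a ∉ R) :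
    ∃ Z', IsPathFromToSet A Z' u T ∧ ∀ a ∈ Z', a ∈ P ∨ a ∈ R := by
  obtain ⟨_, _, hZt⟩ := hZ
  obtain ⟨tR, htR, hRt⟩ := hR
  obtain ⟨R₁, R₂, hRm, -, hR₂⟩ := hRt.exists_split hmR
  refine ⟨_, ⟨tR, htR, (hZt.split hZm).1.append_tail hR₂ fun a ha haR => ?_⟩, fun a ha => ?_⟩
  · rcases List.mem_append.mp ha with haP | ha
    · exact absurd (by simp [hRm, List.mem_cons.mp haR]) (hPR a haP)
    · simpa using ha
  · simp only [List.tail_cons, List.mem_append, List.mem_singleton] at ha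
    rcases ha with (haP | rfl) | haR
    · exact Or.inl haP
    · exact Or.inr hmR
    · exact Or.inr (by simp [hRm, haR])

/-- Induction on `w`. If some path `R` from `v` into `T` avoids `w`, take a path from `c`
through `w` and its first vertex `m` on `R`. If `m` comes before `w`, switching to `R` at `m`
avoids `w`. Otherwise `w` has no two disjoint paths into `T` either, and a vertex separating `w`
from `T`, lying strictly below `w`, replaces `w`. -/
theorem exists_dominator_of_dominates_succ [Finite V] (hA : Acyclic A) (w : V) :
    ∀ {v c}, (v, c) ∈ A → (∃ l, IsPathFromToSet A l c T) → Dominates A c T w →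
      ¬ TwoDisjointPaths A v T → ∃ z ≠ v, Dominates A v T z := by
  induction w using hA.wellFounded_descendant.induction with
  | _ w IH =>
  intro v c hvc ⟨Z, hZ⟩ hw hv
  have hwZ := hw Z hZ
  by_cases hall : Dominates A v T w
  · exact ⟨w, (hA.ne_of_arc_of_reaches hvc (hZ.source_reaches hwZ)).symm, hall⟩
  obtain ⟨R, hR, hwR⟩ : ∃ R, IsPathFromToSet A R v T ∧ w ∉ R := by
    simpa [Dominates] using hall
  have hvZ : v ∉ Z := fun h => hA.ne_of_arc_of_reaches hvc (hZ.source_reaches h) rfl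
  obtain ⟨tZ, htZ, hZt⟩ := hZ
  have hcontact : ∃ a ∈ Z, a ∈ R := by
    by_contra! hno
    refine hv ⟨v :: Z, R, ⟨tZ, htZ, hZt.cons hvc hvZ⟩, hR, fun a ha haR => ?_⟩
    exact (List.mem_cons.mp ha).resolve_right (hno a · haR)
  obtain ⟨P, m, Q, hZm, hmR, hPR⟩ := List.exists_eq_append_cons_first _ hcontact
  rcases List.mem_append.mp (hZm ▸ hwZ) with hwP | hwmQ
  · obtain ⟨P₁, P₂, rfl⟩ := List.append_of_mem hwP
    obtain ⟨hZ₁, hZ₂⟩ := hZt.split (l₁ := P₁) (w := w) (l₂ := P₂ ++ m :: Q) (by simp [hZm])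
    have hPR' : ∀ a ∈ v :: (P₁ ++ [w]), a ∈ R → a = v := by
      intro a ha haR
      simp only [List.mem_cons, List.mem_append, List.not_mem_nil, or_false] at ha
      rcases ha with rfl | haP₁ | rfl
      · rfl
      · exact absurd haR (hPR a (by simp [haP₁]))
      · exact absurd haR hwR
    have hw' : ¬ TwoDisjointPaths A w T :=
      not_twoDisjointPaths_of_avoiding hA hv
        (hZ₁.cons hvc fun h => hvZ <| by
          rw [hZm]; simp only [List.mem_append, List.mem_cons] at h ⊢; tauto)
        hR hwR hPR'
    obtain ⟨d, hwd, hd⟩ := hZ₂.of_cons (by simp)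
    obtain ⟨z, hzw, hz⟩ := IH d ⟨.single hwd, (hA.ne_of_arc_of_reaches hwd .refl).symm⟩ hwd
      ⟨_, tZ, htZ, hd⟩ Dominates.self hw'
    exact IH z ⟨hZ₂.source_reaches (hz _ ⟨tZ, htZ, hZ₂⟩), hzw⟩ hvc ⟨Z, tZ, htZ, hZt⟩
      (hw.trans hz) hv
  · exfalso
    obtain ⟨Z', hZ', hZ'PR⟩ := IsPathFromToSet.reroute ⟨tZ, htZ, hZt⟩ hZm hR hmR hPR
    rcases hZ'PR w (hw Z' hZ') with hwP | hwR'
    · have hnd := hZt.nodup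
      rw [hZm, List.nodup_append] at hnd
      exact hnd.2.2 w hwP w hwmQ rfl
    · exact hwR hwR'

/-- The two-path case of Menger's theorem, for acyclic digraphs. -/
theorem exists_dominator_of_not_twoDisjointPaths [Finite V] (hA : Acyclic A) (hvT : v ∉ T)
    (hl : IsPathFromToSet A l v T) (hv : ¬ TwoDisjointPaths A v T) :
    ∃ z ≠ v, Dominates A v T z := by
  obtain ⟨t, ht, hlt⟩ := hl
  obtain ⟨c, l', -, hvc, hc⟩ := hlt.exists_cons_cons (by rintro rfl; exact hvT ht)
  exact exists_dominator_of_dominates_succ hA c hvc ⟨_, t, ht, hc⟩ Dominates.self hv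

end Dominators

section Embeddings

variable {A : Set (V × V)} {l l₁ l₂ L₁ L₂ R : List V} {p q x y z : V}

theorem intDisjoint_of_forall_eq {c : V} (h : ∀ a ∈ l₁, a ∈ l₂ → a = c)
    (h₁ : IsEndpoint l₁ c) (h₂ : IsEndpoint l₂ c) : IntDisjoint l₁ l₂ :=
  fun a ha₁ ha₂ => (h a ha₁ ha₂).symm ▸ ⟨h₁, h₂⟩

theorem intDisjoint_of_forall_notMem (h : ∀ a ∈ l₁, a ∉ l₂) : IntDisjoint l₁ l₂ :=
  fun a ha₁ ha₂ => absurd ha₂ (h a ha₁)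

theorem hasEmbedding_of_fork (hL₁ : IsPathFromTo A L₁ p x) (hL₂ : IsPathFromTo A L₂ p z)
    (hR : IsPathFromTo A R q y) (hq : q ∈ L₁) (hqp : q ≠ p)
    (hL : ∀ a ∈ L₁, a ∈ L₂ → a = p) (hR₁ : ∀ a ∈ R, a ∈ L₁ → a = q) (hR₂ : ∀ a ∈ R, a ∉ L₂) :
    HasEmbedding A p q x y z := by
  obtain ⟨P₁, P₂, hL₁q, hpq, hqx⟩ := hL₁.exists_split hq
  have hsub₁ : ∀ a ∈ P₁ ++ [q], a ∈ L₁ := fun a ha => by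
    simp only [hL₁q, List.mem_append, List.mem_cons] at ha ⊢; tauto
  have hsub₂ : ∀ a ∈ q :: P₂, a ∈ L₁ := fun a ha => by simp [hL₁q, ha]
  have hmid : ∀ a ∈ q :: P₂, a ∈ P₁ ++ [q] → a = q := by
    have hnd := hL₁.nodup
    rw [hL₁q, ← List.singleton_append, ← List.append_assoc, List.nodup_append] at hnd
    intro a ha₂ ha₁
    rcases List.mem_cons.mp ha₂ with rfl | ha₂
    · rfl
    · exact absurd rfl (hnd.2.2 a ha₁ a ha₂)
  have hpP₂ : p ∉ q :: P₂ := fun h => hqp (hmid p h hpq.head_mem).symm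
  refine ⟨hqp.symm, q :: P₂, R, P₁ ++ [q], L₂, hqx, hR, hpq, hL₂,
    intDisjoint_of_forall_eq (fun a ha haR => hR₁ a haR (hsub₂ a ha)) (.inl hqx.head)
      (.inl hR.head),
    intDisjoint_of_forall_eq hmid (.inl hqx.head) (.inr hpq.getLast),
    intDisjoint_of_forall_notMem fun a ha haL₂ => hpP₂ (hL a (hsub₂ a ha) haL₂ ▸ ha),
    intDisjoint_of_forall_eq (fun a ha haP => hR₁ a ha (hsub₁ a haP)) (.inl hR.head)
      (.inr hpq.getLast),
    intDisjoint_of_forall_notMem hR₂,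
    intDisjoint_of_forall_eq (fun a ha haL₂ => hL a (hsub₁ a ha) haL₂) (.inl hpq.head)
      (.inl hL₂.head)⟩

theorem three_le_outdeg_of_paths [Finite V] {v x₁ x₂ x₃ : V} {l₃ : List V}
    (h₁ : IsPathFromTo A l₁ v x₁) (h₂ : IsPathFromTo A l₂ v x₂) (h₃ : IsPathFromTo A l₃ v x₃)
    (hx₁ : x₁ ≠ v) (hx₂ : x₂ ≠ v) (hx₃ : x₃ ≠ v)
    (h₁₂ : ∀ a ∈ l₁, a ∈ l₂ → a = v) (h₁₃ : ∀ a ∈ l₁, a ∈ l₃ → a = v)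
    (h₂₃ : ∀ a ∈ l₂, a ∈ l₃ → a = v) : 3 ≤ outdeg A v := by
  obtain ⟨w₁, t₁, rfl, hw₁, -⟩ := h₁.exists_cons_cons hx₁.symm
  obtain ⟨w₂, t₂, rfl, hw₂, -⟩ := h₂.exists_cons_cons hx₂.symm
  obtain ⟨w₃, t₃, rfl, hw₃, -⟩ := h₃.exists_cons_cons hx₃.symm
  have hne : ∀ {w t x}, IsPathFromTo A (v :: w :: t) v x → w ≠ v := fun h hw =>
    (List.nodup_cons.mp h.nodup).1 (hw ▸ List.mem_cons_self)
  refine three_le_outdeg hw₁ hw₂ hw₃ (fun h => hne h₁ (h₁₂ w₁ ?_ ?_))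
    (fun h => hne h₁ (h₁₃ w₁ ?_ ?_)) (fun h => hne h₂ (h₂₃ w₂ ?_ ?_)) <;> simp [h]

end Embeddings

section Networks

variable (N : PhyloNetwork V L) {S : Set L}

def labelledLeaves (N : PhyloNetwork V L) (S : Set L) : Set V :=
  {v | IsLeafV N.arcs v ∧ N.lab v ∈ S}

theorem outdeg_le_two (v : V) : outdeg N.arcs v ≤ 2 := by
  rcases N.vertex_type v with ⟨-, h⟩ | ⟨-, h⟩ | ⟨-, h⟩ | ⟨-, h⟩ <;> omega

theorem isLeafV_of_outdeg_eq_zero {v : V} (h : outdeg N.arcs v = 0) : IsLeafV N.arcs v := by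
  rcases N.vertex_type v with ⟨-, h'⟩ | ⟨-, h'⟩ | ⟨-, h'⟩ | h'
  iterate 3 · omega
  exact h'

theorem exists_isLeafV_reaches (v : V) : ∃ w, IsLeafV N.arcs w ∧ Reaches N.arcs v w := by
  have := N.vfin
  induction v using N.acyclic.wellFounded_descendant.induction with
  | _ v IH =>
  by_cases h0 : outdeg N.arcs v = 0
  · exact ⟨v, isLeafV_of_outdeg_eq_zero N h0, .refl⟩
  · obtain ⟨c, hvc⟩ := outdeg_ne_zero_iff.mp h0
    obtain ⟨w, hw, hcw⟩ := IH c ⟨.single hvc, (N.acyclic.ne_of_arc_of_reaches hvc .refl).symm⟩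
    exact ⟨w, hw, .head hvc hcw⟩

theorem root_reaches {ρ : V} (hρ : IsRoot N.arcs ρ) (v : V) : Reaches N.arcs ρ v := by
  have := N.vfin
  induction v using N.acyclic.wellFounded_ancestor.induction with
  | _ v IH =>
  by_cases h0 : indeg N.arcs v = 0
  · have hv : IsRoot N.arcs v := by
      rcases N.vertex_type v with h | ⟨h, -⟩ | ⟨h, -⟩ | ⟨h, -⟩
      · exact h
      iterate 3 · omega
    exact N.root_unique ρ v hρ hv ▸ .refl
  · obtain ⟨u, huv⟩ := indeg_ne_zero_iff.mp h0
    exact (IH u ⟨.single huv, N.acyclic.ne_of_arc_of_reaches huv .refl⟩).tail huv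

theorem tripletLeaves_TN_subset_leafSet : tripletLeaves (TN N) ⊆ leafSet N := by
  rintro _ ⟨⟨_, _, _⟩, ⟨a, b, c, ha, hb, hc, rfl, rfl, rfl, -⟩, rfl | rfl | rfl⟩
  exacts [⟨a, ha, rfl⟩, ⟨b, hb, rfl⟩, ⟨c, hc, rfl⟩]

variable {N}

theorem SNSet.false_of_hasEmbedding (hS : SNSet (TN N) S) {p q x y z : V}
    (hx : x ∈ labelledLeaves N S) (hz : z ∈ labelledLeaves N S) (hxz : x ≠ z)
    (hy : IsLeafV N.arcs y) (hyS : N.lab y ∉ S) (h : HasEmbedding N.arcs p q x y z) : False :=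
  hS.2 ⟨N.lab x, N.lab y, N.lab z, ⟨x, y, z, hx.1, hy, hz.1, rfl, rfl, rfl,
    fun h => hyS (h ▸ hx.2), hxz, fun h => hyS (h ▸ hz.2), p, q, h⟩, hx.2, hz.2, hyS⟩

/-- Let `u` be the last vertex of a path from `π` to `y` lying on one of the two paths. If
`u = π`, then `π` has outdegree three; otherwise `u` is inner on one of them, and branching off
there towards `y` embeds a triplet `sy|s'` with `s, s' ∈ S`. -/
theorem not_twoDisjointPaths_of_reaches (hS : SNSet (TN N) S) {π y : V}
    (hy : IsLeafV N.arcs y) (hyS : N.lab y ∉ S) (hπy : Reaches N.arcs π y) :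
    ¬ TwoDisjointPaths N.arcs π (labelledLeaves N S) := by
  have := N.vfin
  rintro ⟨L₁, L₂, ⟨s₁, hs₁, hL₁⟩, ⟨s₂, hs₂, hL₂⟩, hL⟩
  have hπ : ¬ IsLeafV N.arcs π := fun h => by
    rw [hπy.eq_of_outdeg_eq_zero h.2, ← hL₁.reaches.eq_of_outdeg_eq_zero h.2] at hyS
    exact hyS hs₁.2
  have hne : ∀ {w}, IsLeafV N.arcs w → w ≠ π := fun hw h => hπ (h ▸ hw)
  have hs₁₂ : s₁ ≠ s₂ := fun h => hne hs₁.1 (hL s₁ hL₁.getLast_mem (h ▸ hL₂.getLast_mem))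
  obtain ⟨R, hR⟩ := hπy.exists_isPathFromTo
  obtain ⟨R₁, u, R₂, rfl, hu, hR₂⟩ := List.exists_eq_append_cons_last
    (fun a => a ∈ L₁ ∨ a ∈ L₂) ⟨π, hR.head_mem, .inl hL₁.head_mem⟩
  have hRu := (hR.split rfl).2
  have hR' : ∀ a ∈ u :: R₂, a ∈ L₁ ∨ a ∈ L₂ → a = u := fun a ha h =>
    (List.mem_cons.mp ha).resolve_right fun h' => hR₂ a h' h
  by_cases huπ : u = π
  · subst huπ
    have := three_le_outdeg_of_paths hL₁ hL₂ hRu (hne hs₁.1) (hne hs₂.1) (hne hy) hL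
      (fun a h₁ h₃ => hR' a h₃ (.inl h₁)) (fun a h₂ h₃ => hR' a h₃ (.inr h₂))
    have := outdeg_le_two N u
    omega
  rcases hu with hu | hu
  · refine hS.false_of_hasEmbedding hs₁ hs₂ hs₁₂ hy hyS
      (hasEmbedding_of_fork hL₁ hL₂ hRu hu huπ hL (fun a ha h => hR' a ha (.inl h)) ?_)
    intro a ha h
    obtain rfl := hR' a ha (.inr h)
    exact huπ (hL a hu h)
  · refine hS.false_of_hasEmbedding hs₂ hs₁ hs₁₂.symm hy hyS
      (hasEmbedding_of_fork hL₂ hL₁ hRu hu huπ (fun a h₂ h₁ => hL a h₁ h₂)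
        (fun a ha h => hR' a ha (.inr h)) ?_)
    intro a ha h
    obtain rfl := hR' a ha (.inl h)
    exact huπ (hL a h hu)

end Networks

section SimpleNetworks

variable {N : PhyloNetwork V L} {S : Set L} {ρ v : V}

theorem not_dominates_of_isSplit (hsimple : SimpleNet N) (hρ : IsRoot N.arcs ρ)
    (hv : IsSplit N.arcs v) (hgood : leavesBelowV N v ⊆ S) :
    ¬ Dominates N.arcs ρ (labelledLeaves N S) v := by
  intro hdom
  obtain ⟨τ, hτv, hτ⟩ := existsUnique_of_indeg_eq_one hv.1
  have hvρ : ¬ Reaches N.arcs v ρ := fun h => by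
    obtain rfl := N.acyclic.reaches_antisymm h (root_reaches N hρ v)
    exact absurd hρ.1 (by rw [hv.1]; norm_num)
  suffices CutArc N.arcs (τ, v) from absurd (hsimple.2 _ this).2 (by rw [hv.2]; norm_num)
  refine cutArc_of_forall_arc_into_descendants hτv hvρ fun a b hab hvb hva => ?_
  obtain ⟨s, hs, hbs⟩ := exists_isLeafV_reaches N b
  obtain ⟨Pa, hPa⟩ := (root_reaches N hρ a).exists_isPathFromTo
  obtain ⟨Pb, hPb⟩ := hbs.exists_isPathFromTo
  have hdisj : ∀ c ∈ Pa, c ∉ Pb := fun c hca hcb =>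
    hva (hvb.trans ((hPb.source_reaches hcb).trans (hPa.reaches_target hca)))
  have hvP := hdom _ ⟨s, ⟨hs, hgood ⟨s, hs, hvb.trans hbs, rfl⟩⟩, hPa.append_of_arc hab hPb hdisj⟩
  rcases List.mem_append.mp hvP with h | h
  · exact absurd (hPa.reaches_target h) hva
  · obtain rfl := N.acyclic.reaches_antisymm hvb (hPb.source_reaches h)
    exact ⟨hτ a hab, rfl⟩

theorem Dominates.exists_below (hsimple : SimpleNet N) (hS : SNSet (TN N) S)
    (hρ : IsRoot N.arcs ρ) {x z y : V} (hx : x ∈ labelledLeaves N S)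
    (hz : z ∈ labelledLeaves N S) (hxz : x ≠ z) (hy : IsLeafV N.arcs y) (hyS : N.lab y ∉ S)
    (hv : Dominates N.arcs ρ (labelledLeaves N S) v) :
    ∃ w, Dominates N.arcs ρ (labelledLeaves N S) w ∧ Reaches N.arcs v w ∧ w ≠ v := by
  have := N.vfin
  have hreach : ∀ {t}, t ∈ labelledLeaves N S → Reaches N.arcs v t := fun ht => by
    obtain ⟨P, hP⟩ := (root_reaches N hρ _).exists_isPathFromTo
    exact hP.reaches_target (hv P ⟨_, ht, hP⟩)
  have hvl : ¬ IsLeafV N.arcs v := fun h =>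
    hxz (((hreach hx).eq_of_outdeg_eq_zero h.2).trans ((hreach hz).eq_of_outdeg_eq_zero h.2).symm)
  by_cases hgood : leavesBelowV N v ⊆ S
  · rcases N.vertex_type v with hr | hs | hr | hl
    · exact absurd (hgood ⟨y, hy, N.root_unique _ _ hρ hr ▸ root_reaches N hρ y, rfl⟩) hyS
    · exact absurd hv (not_dominates_of_isSplit hsimple hρ hs hgood)
    · obtain ⟨c, hvc, hc⟩ := existsUnique_of_outdeg_eq_one hr.2
      exact ⟨c, hv.of_unique_successor (fun h => hvl h.1) hc, .single hvc,
        (N.acyclic.ne_of_arc_of_reaches hvc .refl).symm⟩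
    · exact absurd hl hvl
  · obtain ⟨_, ⟨y', hy', hvy', rfl⟩, hy'S⟩ := Set.not_subset.mp hgood
    obtain ⟨P, hP⟩ := (hreach hx).exists_isPathFromTo
    obtain ⟨w, hwv, hw⟩ := exists_dominator_of_not_twoDisjointPaths N.acyclic
      (fun h => hvl h.1) ⟨x, hx, hP⟩ (not_twoDisjointPaths_of_reaches hS hy' hy'S hvy')
    exact ⟨w, hv.trans hw, hP.source_reaches (hw P ⟨x, hx, hP⟩), hwv⟩

theorem SimpleNet.lab_mem_of_snSet (hsimple : SimpleNet N) (hS : SNSet (TN N) S) {x z y : V}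
    (hx : x ∈ labelledLeaves N S) (hz : z ∈ labelledLeaves N S) (hxz : x ≠ z)
    (hy : IsLeafV N.arcs y) : N.lab y ∈ S := by
  by_contra hyS
  have := N.vfin
  obtain ⟨ρ, hρ⟩ := N.root_ex
  suffices ∀ v, ¬ Dominates N.arcs ρ (labelledLeaves N S) v from this ρ Dominates.self
  intro v
  induction v using N.acyclic.wellFounded_descendant.induction with
  | _ v IH =>
  intro hv
  obtain ⟨w, hw, hvw, hwv⟩ := hv.exists_below hsimple hS hρ hx hz hxz hy hyS
  exact IH w ⟨hvw, hwv⟩ hw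

end SimpleNetworks

/-- (Lemma "singleton".) Let `N` be a simple network.  Then every
SN-set of `T(N)` with more than one element is the whole leaf set of `N`;
equivalently, all nontrivial SN-sets of `T(N)` are singletons. -/
theorem simple_SNsets_singletons (V L : Type) (N : PhyloNetwork V L)
    (hsimple : SimpleNet N) (S : Set L)
    (hS : SNSet (TN N) S) (hcard : 1 < S.ncard) :
    S = leafSet N := by
  have hsub : S ⊆ leafSet N := hS.1.trans (tripletLeaves_TN_subset_leafSet N)
  obtain ⟨_, _, ha, hb, hab⟩ := (Set.one_lt_ncard_iff (Set.finite_of_ncard_pos (by omega))).mp hcard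
  obtain ⟨x, hx, rfl⟩ := hsub ha
  obtain ⟨z, hz, rfl⟩ := hsub hb
  refine hsub.antisymm ?_
  rintro _ ⟨y, hy, rfl⟩
  exact hsimple.lab_mem_of_snSet hS ⟨hx, ha⟩ ⟨hz, hb⟩ (fun h => hab (h ▸ rfl)) hy

end Phylo
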